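/- arXiv:1511.05335 — 2 statements merged into one kernel-verified Lean document; each statement's English description precedes it below -/
import Mathlib

section
/- Let Γ, N, K, π, Γ_π, κ_π be as in the Clifford theory setup, and let ♮ be a 2-cocycle of Γ/N (viewed as a 2-cocycle of Γ factoring through (Γ/N)²). If (τ,M) is a representation of the twisted group algebra K[Γ_π/N, ♮κ_π], then the assignment S_γ · (m ⊗ v) = τ(T_{γN}) m ⊗ I^γ(v) for γ ∈ Γ_π, m ∈ M, v ∈ V_π defines a representation of the twisted group algebra K[Γ_π, ♮] on M ⊗_K V_π. -/
open scoped TensorProduct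

/-- Clifford theory setup: `Γ` a finite group, `N ⊴ Γ`, `K` algebraically
closed with `char(K) ∤ |Γ|`, `(π, V)` an irreducible representation of `N` with isotropy group
`Γ_π`, intertwiners `I^γ` (`γ ∈ Γ_π`) with 2-cocycle `κ_π`, and `♮` a 2-cocycle of `Γ/N`
(viewed as a 2-cocycle of `Γ` factoring through `(Γ/N)²`).  If `(τ, M)` is a representation of
the twisted group algebra `K[Γ_π/N, ♮κ_π]` (i.e. `τ(γ) τ(γ') = (♮κ_π)(γ,γ') τ(γγ')` on `Γ_π`,
with `τ` constant on `N`-cosets), then `S_γ · (m ⊗ v) = τ(T_{γN}) m ⊗ I^γ(v)` defines a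
representation of the twisted group algebra `K[Γ_π, ♮]` on `M ⊗_K V`: i.e.
`S_γ ∘ S_{γ'} = ♮(γ,γ') S_{γγ'}` for all `γ, γ' ∈ Γ_π`. -/
theorem clifford_twisted_action_on_tensor
    {K : Type*} [Field K] [IsAlgClosed K]
    {Γ : Type*} [Group Γ] [Fintype Γ]
    (hchar : (Fintype.card Γ : K) ≠ 0)
    (N : Subgroup Γ) [N.Normal]
    {V M : Type*} [AddCommGroup V] [Module K V] [AddCommGroup M] [Module K M]
    (π : Γ → V →ₗ[K] V)
    (hrep : ∀ n ∈ N, ∀ n' ∈ N, π (n * n') = π n ∘ₗ π n')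
    (hone : π 1 = LinearMap.id)
    (hnontriv : Nontrivial V)
    (hirr : ∀ U : Submodule K V, (∀ n ∈ N, ∀ v ∈ U, π n v ∈ U) → U = ⊥ ∨ U = ⊤)
    (Γπ : Subgroup Γ)
    (hstab : ∀ γ : Γ, γ ∈ Γπ ↔
      ∃ e : V ≃ₗ[K] V, ∀ n ∈ N,
        (e : V →ₗ[K] V) ∘ₗ π (γ⁻¹ * n * γ) = π n ∘ₗ (e : V →ₗ[K] V))
    (I : Γ → V ≃ₗ[K] V)
    (hI : ∀ γ ∈ Γπ, ∀ n ∈ N,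
      ((I γ : V →ₗ[K] V)) ∘ₗ π (γ⁻¹ * n * γ) = π n ∘ₗ ((I γ : V →ₗ[K] V)))
    (κ : Γ → Γ → Kˣ)
    (hκ : ∀ γ ∈ Γπ, ∀ γ' ∈ Γπ,
      ((I (γ * γ') : V →ₗ[K] V))
        = (κ γ γ' : K) • (((I γ : V →ₗ[K] V)) ∘ₗ ((I γ' : V →ₗ[K] V))))
    (nat : Γ → Γ → Kˣ)
    (hnat_cocycle : ∀ γ₁ γ₂ γ₃ : Γ,
      nat γ₁ (γ₂ * γ₃) * nat γ₂ γ₃ = nat γ₁ γ₂ * nat (γ₁ * γ₂) γ₃)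
    (hnat_factors : ∀ γ γ' : Γ, ∀ n ∈ N, nat (γ * n) γ' = nat γ γ' ∧ nat γ (γ' * n) = nat γ γ')
    (τ : Γ → M →ₗ[K] M)
    (hτN : ∀ γ ∈ Γπ, ∀ n ∈ N, τ (γ * n) = τ γ)
    (hτ : ∀ γ ∈ Γπ, ∀ γ' ∈ Γπ,
      τ γ ∘ₗ τ γ' = ((nat γ γ' : K) * (κ γ γ' : K)) • τ (γ * γ')) :
    ∀ γ ∈ Γπ, ∀ γ' ∈ Γπ,
      (TensorProduct.map (τ γ) ((I γ : V →ₗ[K] V))) ∘ₗ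
          (TensorProduct.map (τ γ') ((I γ' : V →ₗ[K] V)))
        = (nat γ γ' : K) •
            TensorProduct.map (τ (γ * γ')) ((I (γ * γ') : V →ₗ[K] V)) := by
  intro γ hγ γ' hγ'
  rw [← TensorProduct.map_comp, hτ γ hγ γ' hγ', hκ γ hγ γ' hγ']
  rw [TensorProduct.map_smul_right, TensorProduct.map_smul_left, smul_smul]
end

section
/- Let Γ be a finite group, N ⊴ Γ, K algebraically closed with char(K) ∤ |Γ|, ♮ a 2-cocycle of Γ/N, and π ∈ Irr_K(N) with isotropy group Γ_π and cocycle κ_π. For any K[Γ,♮]-module V there is a natural K-linear isomorphism Hom_{K[Γ,♮]}( ind_{K[Γ_π,♮]}^{K[Γ,♮]}(M ⊗ V_π), V ) ≅ Hom_{K[Γ_π/N, ♮κ_π]}( M, Hom_N(V_π, V) ), where M is any K[Γ_π/N, ♮κ_π]-module, K[Γ_π,♮] acts on M ⊗ V_π by S_γ(m⊗v) = τ(T_{γN})m ⊗ I^γ(v), and K[Γ_π/N, ♮κ_π] acts on Hom_N(V_π,V) through the identification Hom_N(V_π, ind_{K[N]}^{K[Γ_π,♮]}V_π) ≅ K[Γ_π/N,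 ♮κ_π]. -/
open scoped TensorProduct

/-! An equivariant map out of the induced module is determined by its restriction to the summand
of the trivial coset, since `S_{s(c)}` carries that summand onto the summand of `c`; this
restriction is `Γ_π`-equivariant because `Γ_π` stabilises the trivial coset. Conversely a
`Γ_π`-equivariant `f : M ⊗ V_π → W` extends to `Σ_c S_{s(c)} ⊗ x_c ↦ Σ_c ρ(s(c)) f(x_c)`, and the
twisted cocycle identity for `ρ` makes the extension `Γ`-equivariant. -/

/-- The action of the basis element `S_γ` of `K[Γ,♮]` on the induced module
`ind_{K[Γ_π,♮]}^{K[Γ,♮]}(M ⊗ V_π)`, realized on `(Γ ⧸ Γ_π) →₀ (M ⊗ V)`: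
`S_γ · (S_{s(c)} ⊗ x) = ♮(γ, s(c)) ♮(s(γ̄c), g')⁻¹ (S_{s(γ̄c)} ⊗ (τ(g') ⊗ I^{g'}) x)` where
`g' = s(γ̄c)⁻¹ γ s(c) ∈ Γ_π`. -/
noncomputable def inducedAction {K Γ : Type*} [Field K] [Group Γ]
    {V M : Type*} [AddCommGroup V] [Module K V] [AddCommGroup M] [Module K M]
    (Γπ : Subgroup Γ) (nat : Γ → Γ → Kˣ)
    (τ : Γ → M →ₗ[K] M) (I : Γ → V →ₗ[K] V) (s : Γ ⧸ Γπ → Γ) (γ : Γ) :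
    ((Γ ⧸ Γπ) →₀ (M ⊗[K] V)) →ₗ[K] ((Γ ⧸ Γπ) →₀ (M ⊗[K] V)) :=
  Finsupp.lsum K fun c : Γ ⧸ Γπ =>
    (Finsupp.lsingle (γ • c)).comp
      ((((nat γ (s c) : K) * ((nat (s (γ • c)) ((s (γ • c))⁻¹ * γ * s c) : K))⁻¹)) •
        TensorProduct.map (τ ((s (γ • c))⁻¹ * γ * s c)) (I ((s (γ • c))⁻¹ * γ * s c)))

section Cocycle

variable {G A : Type*} [MulOneClass G] [CancelMonoid A] {c : G → G → A}

theorem cocycle_apply_one_right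
    (hc : ∀ g₁ g₂ g₃, c g₁ (g₂ * g₃) * c g₂ g₃ = c g₁ g₂ * c (g₁ * g₂) g₃) (h1 : c 1 1 = 1)
    (g : G) : c g 1 = 1 := by
  have h := hc g 1 1
  rw [mul_one, mul_one, h1, mul_one] at h
  exact left_eq_mul.mp h

theorem cocycle_apply_one_left
    (hc : ∀ g₁ g₂ g₃, c g₁ (g₂ * g₃) * c g₂ g₃ = c g₁ g₂ * c (g₁ * g₂) g₃) (h1 : c 1 1 = 1)
    (g : G) : c 1 g = 1 := by
  have h := hc 1 1 g
  rw [one_mul, one_mul, h1, one_mul] at h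
  exact mul_eq_right.mp h

end Cocycle

section Section

variable {Γ : Type*} [Group Γ] {H : Subgroup Γ} {s : Γ ⧸ H → Γ}

theorem section_inv_mul_mul_mem (hs : ∀ c, (QuotientGroup.mk (s c) : Γ ⧸ H) = c)
    (γ : Γ) (c : Γ ⧸ H) : (s (γ • c))⁻¹ * γ * s c ∈ H := by
  rw [mul_assoc, ← QuotientGroup.eq, hs, ← smul_eq_mul, ← MulAction.Quotient.smul_mk, hs]

theorem section_smul_mk_one (hs : ∀ c, (QuotientGroup.mk (s c) : Γ ⧸ H) = c) (c : Γ ⧸ H) :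
    s c • (QuotientGroup.mk 1 : Γ ⧸ H) = c := by
  rw [MulAction.Quotient.smul_mk, smul_eq_mul, mul_one, hs]

theorem smul_mk_one_of_mem {γ : Γ} (hγ : γ ∈ H) :
    γ • (QuotientGroup.mk 1 : Γ ⧸ H) = QuotientGroup.mk 1 := by
  rw [MulAction.Quotient.smul_mk, smul_eq_mul, mul_one, QuotientGroup.eq, mul_one]
  exact inv_mem hγ

end Section

section InducedModule

variable {K Γ V M W : Type*} [Field K] [Group Γ]
  [AddCommGroup V] [Module K V] [AddCommGroup M] [Module K M] [AddCommGroup W] [Module K W]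
  {Γπ : Subgroup Γ} {nat : Γ → Γ → Kˣ} {τ : Γ → M →ₗ[K] M} {I : Γ → V →ₗ[K] V}
  {s : Γ ⧸ Γπ → Γ} {ρ : Γ → W →ₗ[K] W}

@[simp]
theorem inducedAction_single (γ : Γ) (c : Γ ⧸ Γπ) (x : M ⊗[K] V) :
    inducedAction Γπ nat τ I s γ (Finsupp.single c x) =
      Finsupp.single (γ • c)
        (((nat γ (s c) : K) * (nat (s (γ • c)) ((s (γ • c))⁻¹ * γ * s c) : K)⁻¹) •
          TensorProduct.map (τ ((s (γ • c))⁻¹ * γ * s c)) (I ((s (γ • c))⁻¹ * γ * s c)) x) := by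
  rw [inducedAction, Finsupp.lsum_single, LinearMap.comp_apply, Finsupp.lsingle_apply,
    LinearMap.smul_apply]

theorem apply_single_eq_of_comp_inducedAction
    (hnat : ∀ γ, nat γ 1 = 1) (hτ1 : τ 1 = LinearMap.id) (hI1 : I 1 = LinearMap.id)
    (hs : ∀ c, (QuotientGroup.mk (s c) : Γ ⧸ Γπ) = c) (hs1 : s (QuotientGroup.mk 1) = 1)
    {Φ : ((Γ ⧸ Γπ) →₀ (M ⊗[K] V)) →ₗ[K] W}
    (hΦ : ∀ γ, Φ ∘ₗ inducedAction Γπ nat τ I s γ = ρ γ ∘ₗ Φ) (c : Γ ⧸ Γπ) (x : M ⊗[K] V) :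
    Φ (Finsupp.single c x) = ρ (s c) (Φ (Finsupp.single (QuotientGroup.mk 1) x)) := by
  have h := LinearMap.congr_fun (hΦ (s c)) (Finsupp.single (QuotientGroup.mk 1) x)
  rw [LinearMap.comp_apply, LinearMap.comp_apply, inducedAction_single,
    section_smul_mk_one hs, hs1] at h
  simpa [hτ1, hI1, hnat] using h

theorem apply_single_one_map_of_comp_inducedAction
    (hnatr : ∀ γ, nat γ 1 = 1) (hnatl : ∀ γ, nat 1 γ = 1) (hs1 : s (QuotientGroup.mk 1) = 1)
    {Φ : ((Γ ⧸ Γπ) →₀ (M ⊗[K] V)) →ₗ[K] W}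
    (hΦ : ∀ γ, Φ ∘ₗ inducedAction Γπ nat τ I s γ = ρ γ ∘ₗ Φ) {γ : Γ} (hγ : γ ∈ Γπ)
    (m : M) (v : V) :
    Φ (Finsupp.single (QuotientGroup.mk 1) (τ γ m ⊗ₜ[K] I γ v)) =
      ρ γ (Φ (Finsupp.single (QuotientGroup.mk 1) (m ⊗ₜ[K] v))) := by
  have h := LinearMap.congr_fun (hΦ γ) (Finsupp.single (QuotientGroup.mk 1) (m ⊗ₜ[K] v))
  rw [LinearMap.comp_apply, LinearMap.comp_apply, inducedAction_single,
    smul_mk_one_of_mem hγ, hs1] at h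
  simpa [hnatr, hnatl] using h

theorem ext_of_comp_inducedAction
    (hnat : ∀ γ, nat γ 1 = 1) (hτ1 : τ 1 = LinearMap.id) (hI1 : I 1 = LinearMap.id)
    (hs : ∀ c, (QuotientGroup.mk (s c) : Γ ⧸ Γπ) = c) (hs1 : s (QuotientGroup.mk 1) = 1)
    {Φ Φ' : ((Γ ⧸ Γπ) →₀ (M ⊗[K] V)) →ₗ[K] W}
    (hΦ : ∀ γ, Φ ∘ₗ inducedAction Γπ nat τ I s γ = ρ γ ∘ₗ Φ)
    (hΦ' : ∀ γ, Φ' ∘ₗ inducedAction Γπ nat τ I s γ = ρ γ ∘ₗ Φ')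
    (h : ∀ (m : M) (v : V), Φ (Finsupp.single (QuotientGroup.mk 1) (m ⊗ₜ[K] v)) =
      Φ' (Finsupp.single (QuotientGroup.mk 1) (m ⊗ₜ[K] v))) :
    Φ = Φ' := by
  have hone : Φ ∘ₗ Finsupp.lsingle (QuotientGroup.mk 1) =
      Φ' ∘ₗ Finsupp.lsingle (QuotientGroup.mk 1) :=
    TensorProduct.ext' h
  refine Finsupp.lhom_ext fun c x => ?_
  rw [apply_single_eq_of_comp_inducedAction hnat hτ1 hI1 hs hs1 hΦ,
    apply_single_eq_of_comp_inducedAction hnat hτ1 hI1 hs hs1 hΦ']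
  exact congrArg (ρ (s c)) (LinearMap.congr_fun hone x)

variable (s ρ) in
noncomputable def inducedLift (f : M ⊗[K] V →ₗ[K] W) : ((Γ ⧸ Γπ) →₀ (M ⊗[K] V)) →ₗ[K] W :=
  Finsupp.lsum K fun c => ρ (s c) ∘ₗ f

@[simp]
theorem inducedLift_single (f : M ⊗[K] V →ₗ[K] W) (c : Γ ⧸ Γπ) (x : M ⊗[K] V) :
    inducedLift s ρ f (Finsupp.single c x) = ρ (s c) (f x) := by
  simp [inducedLift]

theorem inducedLift_single_one (hρ1 : ρ 1 = LinearMap.id) (hs1 : s (QuotientGroup.mk 1) = 1)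
    (f : M ⊗[K] V →ₗ[K] W) (x : M ⊗[K] V) :
    inducedLift s ρ f (Finsupp.single (QuotientGroup.mk 1) x) = f x := by
  rw [inducedLift_single, hs1, hρ1, LinearMap.id_apply]

theorem inducedLift_comp_inducedAction
    (hρ : ∀ γ γ', ρ γ ∘ₗ ρ γ' = (nat γ γ' : K) • ρ (γ * γ'))
    (hs : ∀ c, (QuotientGroup.mk (s c) : Γ ⧸ Γπ) = c) {f : M ⊗[K] V →ₗ[K] W}
    (hf : ∀ γ ∈ Γπ, ∀ (m : M) (v : V), f (τ γ m ⊗ₜ[K] I γ v) = ρ γ (f (m ⊗ₜ[K] v))) (γ : Γ) :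
    inducedLift s ρ f ∘ₗ inducedAction Γπ nat τ I s γ = ρ γ ∘ₗ inducedLift s ρ f := by
  refine Finsupp.lhom_ext' fun c => TensorProduct.ext' fun m v => ?_
  have hρρ : ∀ γ γ' w, ρ γ (ρ γ' w) = (nat γ γ' : K) • ρ (γ * γ') w :=
    fun γ γ' w => LinearMap.congr_fun (hρ γ γ') w
  have hmul : s (γ • c) * ((s (γ • c))⁻¹ * γ * s c) = γ * s c := by group
  simp only [LinearMap.comp_apply, Finsupp.lsingle_apply, inducedAction_single,
    ← Finsupp.smul_single, map_smul, inducedLift_single, TensorProduct.map_tmul,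
    hf _ (section_inv_mul_mul_mem hs γ c), hρρ, hmul, smul_smul]
  rw [mul_assoc, inv_mul_cancel₀ (Units.ne_zero _), mul_one]

end InducedModule

theorem frobenius_reciprocity_twisted_general
    {K : Type*} [Field K]
    {Γ : Type*} [Group Γ]
    (N : Subgroup Γ)
    {V M W : Type*} [AddCommGroup V] [Module K V] [AddCommGroup M] [Module K M]
    [AddCommGroup W] [Module K W]
    (π : Γ → V →ₗ[K] V)
    (Γπ : Subgroup Γ) (hNle : N ≤ Γπ)
    (I : Γ → V →ₗ[K] V)
    (hI1 : I 1 = LinearMap.id)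
    (hIN : ∀ n ∈ N, I n = π n)
    (nat : Γ → Γ → Kˣ)
    (hnat_cocycle : ∀ γ₁ γ₂ γ₃ : Γ,
      nat γ₁ (γ₂ * γ₃) * nat γ₂ γ₃ = nat γ₁ γ₂ * nat (γ₁ * γ₂) γ₃)
    (hnat_one : nat 1 1 = 1)
    (τ : Γ → M →ₗ[K] M)
    (hτN : ∀ γ ∈ Γπ, ∀ n ∈ N, τ (γ * n) = τ γ)
    (hτ1 : τ 1 = LinearMap.id)
    (ρ : Γ → W →ₗ[K] W)
    (hρ : ∀ γ γ' : Γ, ρ γ ∘ₗ ρ γ' = (nat γ γ' : K) • ρ (γ * γ'))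
    (hρ1 : ρ 1 = LinearMap.id)
    (s : Γ ⧸ Γπ → Γ)
    (hs : ∀ c : Γ ⧸ Γπ, (QuotientGroup.mk (s c) : Γ ⧸ Γπ) = c)
    (hs1 : s (QuotientGroup.mk (1 : Γ)) = 1) :
    -- (i) for equivariant `Φ`, the map `F(m)(v) = Φ(S_1 ⊗ m ⊗ v)` lands in
    -- `Hom_{K[Γ_π/N,♮κ_π]}(M, Hom_N(V_π, W))`
    (∀ Φ : ((Γ ⧸ Γπ) →₀ (M ⊗[K] V)) →ₗ[K] W,
      (∀ γ : Γ, Φ ∘ₗ inducedAction Γπ nat τ I s γ = ρ γ ∘ₗ Φ) →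
      (∀ (m : M) (v : V), ∀ n ∈ N,
          Φ (Finsupp.single (QuotientGroup.mk (1 : Γ)) (m ⊗ₜ[K] (π n v)))
            = ρ n (Φ (Finsupp.single (QuotientGroup.mk (1 : Γ)) (m ⊗ₜ[K] v)))) ∧
      (∀ γ ∈ Γπ, ∀ (m : M) (v : V),
          Φ (Finsupp.single (QuotientGroup.mk (1 : Γ)) ((τ γ m) ⊗ₜ[K] (I γ v)))
            = ρ γ (Φ (Finsupp.single (QuotientGroup.mk (1 : Γ)) (m ⊗ₜ[K] v))))) ∧
    -- (ii) the correspondence `Φ ↦ F` is injective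
    (∀ Φ Φ' : ((Γ ⧸ Γπ) →₀ (M ⊗[K] V)) →ₗ[K] W,
      (∀ γ : Γ, Φ ∘ₗ inducedAction Γπ nat τ I s γ = ρ γ ∘ₗ Φ) →
      (∀ γ : Γ, Φ' ∘ₗ inducedAction Γπ nat τ I s γ = ρ γ ∘ₗ Φ') →
      (∀ (m : M) (v : V),
        Φ (Finsupp.single (QuotientGroup.mk (1 : Γ)) (m ⊗ₜ[K] v))
          = Φ' (Finsupp.single (QuotientGroup.mk (1 : Γ)) (m ⊗ₜ[K] v))) →
      Φ = Φ') ∧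
    -- (iii) and surjective
    (∀ F : M →ₗ[K] (V →ₗ[K] W),
      (∀ (m : M) (v : V), ∀ n ∈ N, F m (π n v) = ρ n (F m v)) →
      (∀ γ ∈ Γπ, ∀ (m : M) (v : V), F (τ γ m) (I γ v) = ρ γ (F m v)) →
      ∃ Φ : ((Γ ⧸ Γπ) →₀ (M ⊗[K] V)) →ₗ[K] W,
        (∀ γ : Γ, Φ ∘ₗ inducedAction Γπ nat τ I s γ = ρ γ ∘ₗ Φ) ∧
        ∀ (m : M) (v : V),
          F m v = Φ (Finsupp.single (QuotientGroup.mk (1 : Γ)) (m ⊗ₜ[K] v))) := by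
  have hnatr := cocycle_apply_one_right hnat_cocycle hnat_one
  have hnatl := cocycle_apply_one_left hnat_cocycle hnat_one
  refine ⟨fun Φ hΦ => ⟨fun m v n hn => ?_,
      fun γ => apply_single_one_map_of_comp_inducedAction hnatr hnatl hs1 hΦ⟩,
    fun Φ Φ' => ext_of_comp_inducedAction hnatr hτ1 hI1 hs hs1,
    fun F _ hFΓ => ⟨inducedLift s ρ (TensorProduct.lift F), ?_, fun m v => ?_⟩⟩
  · have hτn : τ n = LinearMap.id := by simpa [hτ1] using hτN 1 (one_mem _) n hn
    simpa [hτn, hIN n hn] using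
      apply_single_one_map_of_comp_inducedAction hnatr hnatl hs1 hΦ (hNle hn) m v
  · exact inducedLift_comp_inducedAction hρ hs hFΓ
  · rw [inducedLift_single_one hρ1 hs1, TensorProduct.lift.tmul]

/-- Clifford theory with twisting: `Γ` finite, `N ⊴ Γ`, `K` algebraically
closed with `char K ∤ |Γ|`, `π ∈ Irr_K(N)` with isotropy group `Γ_π`, normalized intertwiners
`I^γ` with 2-cocycle `κ_π`, and `♮` a 2-cocycle of `Γ/N`.  For any `K[Γ,♮]`-module `W` (with
action `ρ`), and any `K[Γ_π/N, ♮κ_π]`-module `M` (with action `τ`), there is a natural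
`K`-linear isomorphism
`Hom_{K[Γ,♮]}( ind_{K[Γ_π,♮]}^{K[Γ,♮]}(M ⊗ V_π), W ) ≅ Hom_{K[Γ_π/N, ♮κ_π]}( M, Hom_N(V_π, W) )`,
sending `Φ` to `F` with `F(m)(v) = Φ(S_1 ⊗ m ⊗ v)`.  This is expressed below as: for every
equivariant `Φ`, the associated `F` is `N`-equivariant in `v` and `♮κ_π`-equivariant in `m`
(first clause); the assignment `Φ ↦ F` is injective (second clause); and every such `F` arises
from a unique equivariant `Φ` (third clause). -/
theorem frobenius_reciprocity_twisted
    {K : Type*} [Field K] [IsAlgClosed K]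
    {Γ : Type*} [Group Γ] [Fintype Γ]
    (hchar : (Fintype.card Γ : K) ≠ 0)
    (N : Subgroup Γ) [N.Normal]
    {V M W : Type*} [AddCommGroup V] [Module K V] [AddCommGroup M] [Module K M]
    [AddCommGroup W] [Module K W]
    (π : Γ → V →ₗ[K] V)
    (hrep : ∀ n ∈ N, ∀ n' ∈ N, π (n * n') = π n ∘ₗ π n')
    (hone : π 1 = LinearMap.id)
    (hnontriv : Nontrivial V)
    (hirr : ∀ U : Submodule K V, (∀ n ∈ N, ∀ v ∈ U, π n v ∈ U) → U = ⊥ ∨ U = ⊤)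
    (Γπ : Subgroup Γ) (hNle : N ≤ Γπ)
    (hstab : ∀ γ : Γ, γ ∈ Γπ ↔
      ∃ e : V ≃ₗ[K] V, ∀ n ∈ N,
        (e : V →ₗ[K] V) ∘ₗ π (γ⁻¹ * n * γ) = π n ∘ₗ (e : V →ₗ[K] V))
    (I : Γ → V →ₗ[K] V)
    (hIbij : ∀ γ ∈ Γπ, Function.Bijective (I γ))
    (hI : ∀ γ ∈ Γπ, ∀ n ∈ N, I γ ∘ₗ π (γ⁻¹ * n * γ) = π n ∘ₗ I γ)
    (hI1 : I 1 = LinearMap.id)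
    (hIN : ∀ n ∈ N, I n = π n)
    (κ : Γ → Γ → Kˣ)
    (hκ : ∀ γ ∈ Γπ, ∀ γ' ∈ Γπ, I (γ * γ') = (κ γ γ' : K) • (I γ ∘ₗ I γ'))
    (nat : Γ → Γ → Kˣ)
    (hnat_cocycle : ∀ γ₁ γ₂ γ₃ : Γ,
      nat γ₁ (γ₂ * γ₃) * nat γ₂ γ₃ = nat γ₁ γ₂ * nat (γ₁ * γ₂) γ₃)
    (hnat_factors : ∀ γ γ' : Γ, ∀ n ∈ N, nat (γ * n) γ' = nat γ γ' ∧ nat γ (γ' * n) = nat γ γ')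
    (hnat_one : nat 1 1 = 1)
    (τ : Γ → M →ₗ[K] M)
    (hτ : ∀ γ ∈ Γπ, ∀ γ' ∈ Γπ,
      τ γ ∘ₗ τ γ' = ((nat γ γ' : K) * (κ γ γ' : K)) • τ (γ * γ'))
    (hτN : ∀ γ ∈ Γπ, ∀ n ∈ N, τ (γ * n) = τ γ)
    (hτ1 : τ 1 = LinearMap.id)
    (ρ : Γ → W →ₗ[K] W)
    (hρ : ∀ γ γ' : Γ, ρ γ ∘ₗ ρ γ' = (nat γ γ' : K) • ρ (γ * γ'))
    (hρ1 : ρ 1 = LinearMap.id)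
    (s : Γ ⧸ Γπ → Γ)
    (hs : ∀ c : Γ ⧸ Γπ, (QuotientGroup.mk (s c) : Γ ⧸ Γπ) = c)
    (hs1 : s (QuotientGroup.mk (1 : Γ)) = 1) :
    -- (i) for equivariant `Φ`, the map `F(m)(v) = Φ(S_1 ⊗ m ⊗ v)` lands in
    -- `Hom_{K[Γ_π/N,♮κ_π]}(M, Hom_N(V_π, W))`
    (∀ Φ : ((Γ ⧸ Γπ) →₀ (M ⊗[K] V)) →ₗ[K] W,
      (∀ γ : Γ, Φ ∘ₗ inducedAction Γπ nat τ I s γ = ρ γ ∘ₗ Φ) →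
      (∀ (m : M) (v : V), ∀ n ∈ N,
          Φ (Finsupp.single (QuotientGroup.mk (1 : Γ)) (m ⊗ₜ[K] (π n v)))
            = ρ n (Φ (Finsupp.single (QuotientGroup.mk (1 : Γ)) (m ⊗ₜ[K] v)))) ∧
      (∀ γ ∈ Γπ, ∀ (m : M) (v : V),
          Φ (Finsupp.single (QuotientGroup.mk (1 : Γ)) ((τ γ m) ⊗ₜ[K] (I γ v)))
            = ρ γ (Φ (Finsupp.single (QuotientGroup.mk (1 : Γ)) (m ⊗ₜ[K] v))))) ∧
    -- (ii) the correspondence `Φ ↦ F` is injective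
    (∀ Φ Φ' : ((Γ ⧸ Γπ) →₀ (M ⊗[K] V)) →ₗ[K] W,
      (∀ γ : Γ, Φ ∘ₗ inducedAction Γπ nat τ I s γ = ρ γ ∘ₗ Φ) →
      (∀ γ : Γ, Φ' ∘ₗ inducedAction Γπ nat τ I s γ = ρ γ ∘ₗ Φ') →
      (∀ (m : M) (v : V),
        Φ (Finsupp.single (QuotientGroup.mk (1 : Γ)) (m ⊗ₜ[K] v))
          = Φ' (Finsupp.single (QuotientGroup.mk (1 : Γ)) (m ⊗ₜ[K] v))) →
      Φ = Φ') ∧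
    -- (iii) and surjective
    (∀ F : M →ₗ[K] (V →ₗ[K] W),
      (∀ (m : M) (v : V), ∀ n ∈ N, F m (π n v) = ρ n (F m v)) →
      (∀ γ ∈ Γπ, ∀ (m : M) (v : V), F (τ γ m) (I γ v) = ρ γ (F m v)) →
      ∃ Φ : ((Γ ⧸ Γπ) →₀ (M ⊗[K] V)) →ₗ[K] W,
        (∀ γ : Γ, Φ ∘ₗ inducedAction Γπ nat τ I s γ = ρ γ ∘ₗ Φ) ∧
        ∀ (m : M) (v : V),
          F m v = Φ (Finsupp.single (QuotientGroup.mk (1 : Γ)) (m ⊗ₜ[K] v))) :=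
  frobenius_reciprocity_twisted_general N π Γπ hNle I hI1 hIN nat hnat_cocycle hnat_one τ hτN hτ1 ρ
    hρ hρ1 s hs hs1
end
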